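/- arXiv:2510.02210 — 2 statements merged into one kernel-verified Lean document; each statement's English description precedes it below -/
import Mathlib

section
/- Let (R, m) be a commutative Noetherian local ring and let M be a finitely generated R-module whose support is all of Spec(R). If Ext^1_R(M, M) = 0 and End_R(M) is isomorphic to Hom_R(M, M**) as right End_R(M)-modules, then M is reflexive, i.e., the natural biduality map M → M** is bijective. -/
open CategoryTheory

section Aux

variable {R : Type} [CommRing R]


variable {R : Type} [CommRing R]

/-- Nakayama-style: if `p ∈ Supp M` and `M` is finite, then `M ⧸ pM` has an element whose
annihilator is contained in `p`. -/
lemma aux_support_quot {M : Type} [AddCommGroup M] [Module R M]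
    [Module.Finite R M] (p : PrimeSpectrum R) (hp : p ∈ Module.support R M) :
    ∃ w : M ⧸ (p.asIdeal • ⊤ : Submodule R M), ∀ r : R, r ∉ p.asIdeal → r • w ≠ 0 := by
  by_contra hcon
  push_neg at hcon
  rw [Module.mem_support_iff] at hp
  set A := Localization p.asIdeal.primeCompl with hA
  set Mp := LocalizedModule p.asIdeal.primeCompl M with hMp
  set I : Ideal A := p.asIdeal.map (algebraMap R A) with hI
  have key : ∀ y ∈ (p.asIdeal • ⊤ : Submodule R M),
      LocalizedModule.mk y (1 : p.asIdeal.primeCompl) ∈ (I • (⊤ : Submodule A Mp)) := by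
    intro y hy
    refine Submodule.smul_induction_on hy (fun a ha w _ => ?_) (fun y₁ y₂ h1 h2 => ?_)
    · have : LocalizedModule.mk (a • w) (1 : p.asIdeal.primeCompl)
          = (algebraMap R A a) • LocalizedModule.mk w (1 : p.asIdeal.primeCompl) := by
        rw [algebraMap_smul, LocalizedModule.smul'_mk]
      rw [this]
      exact Submodule.smul_mem_smul (Ideal.mem_map_of_mem _ ha) Submodule.mem_top
    · have : LocalizedModule.mk (y₁ + y₂) (1 : p.asIdeal.primeCompl)
          = LocalizedModule.mk y₁ (1 : p.asIdeal.primeCompl)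
            + LocalizedModule.mk y₂ (1 : p.asIdeal.primeCompl) := by
        rw [LocalizedModule.mk_add_mk]; simp
      rw [this]
      exact Submodule.add_mem _ h1 h2
  have hle : (⊤ : Submodule A Mp) ≤ I • ⊤ := by
    intro x _
    induction x using LocalizedModule.induction_on with
    | h m s =>
      obtain ⟨r, hr, hrm⟩ := hcon (Submodule.Quotient.mk m)
      rw [← Submodule.Quotient.mk_smul, Submodule.Quotient.mk_eq_zero] at hrm
      have : LocalizedModule.mk m s
          = (Localization.mk 1 (⟨r, hr⟩ * s)) • LocalizedModule.mk (r • m)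
              (1 : p.asIdeal.primeCompl) := by
        rw [LocalizedModule.mk_smul_mk, one_smul, mul_one, LocalizedModule.mk_eq]
        exact ⟨1, by simp [Submonoid.smul_def, smul_smul, mul_comm]⟩
      rw [this]
      exact Submodule.smul_mem _ _ (key _ hrm)
  have hfin : Module.Finite A Mp :=
    Module.Finite.of_isLocalizedModule p.asIdeal.primeCompl
      (LocalizedModule.mkLinearMap p.asIdeal.primeCompl M)
  obtain ⟨c, hc1, hc0⟩ :=
    Submodule.exists_sub_one_mem_and_smul_eq_zero_of_fg_of_le_smul I ⊤
      (Module.finite_def.mp hfin) hle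
  have hcu : IsUnit c := by
    by_contra hcu
    have hmax : c ∈ IsLocalRing.maximalIdeal A := (IsLocalRing.mem_maximalIdeal c).2 hcu
    have h1 : (1 : A) ∈ IsLocalRing.maximalIdeal A := by
      have : c - (c - 1) ∈ IsLocalRing.maximalIdeal A := by
        refine Submodule.sub_mem _ hmax ?_
        rw [← Localization.AtPrime.map_eq_maximalIdeal]
        exact hc1
      simpa using this
    exact one_notMem_nonunits ((IsLocalRing.mem_maximalIdeal 1).1 h1)
  have : Subsingleton Mp := by
    refine subsingleton_of_forall_eq 0 (fun x => ?_)
    obtain ⟨cu, rfl⟩ := hcu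
    have h0 : (cu : A) • x = 0 := hc0 x Submodule.mem_top
    calc x = (cu⁻¹ : Aˣ) • ((cu : A) • x) := by
            rw [← Units.smul_def, smul_smul]
            simp [Units.smul_def]
      _ = 0 := by rw [h0, smul_zero]
  exact (not_subsingleton_iff_nontrivial.mpr hp) this

/-- A finitely generated module over a domain `D` with an element with zero annihilator
admits a functional that does not vanish on that element. -/
lemma aux_exists_functional {D V : Type} [CommRing D] [IsDomain D] [AddCommGroup V]
    [Module D V] [Module.Finite D V] (v : V) (hv : ∀ d : D, d ≠ 0 → d • v ≠ 0) :
    ∃ ψ : V →ₗ[D] D, ψ v ≠ 0 := by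
  classical
  set K := FractionRing D
  set V₀ := LocalizedModule (nonZeroDivisors D) V with hV₀
  set ml : V →ₗ[D] V₀ := LocalizedModule.mkLinearMap (nonZeroDivisors D) V with hml
  have hv0 : ml v ≠ 0 := by
    intro h
    have : LocalizedModule.mk v (1 : nonZeroDivisors D)
        = LocalizedModule.mk (0 : V) (1 : nonZeroDivisors D) := by
      rw [LocalizedModule.zero_mk]; exact h
    rw [LocalizedModule.mk_eq] at this
    obtain ⟨u, hu⟩ := this
    simp only [one_smul, smul_zero] at hu
    exact hv u (nonZeroDivisors.ne_zero u.2) hu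
  -- pick a dual functional over the fraction field
  have hf : ∃ f : Module.Dual K V₀, f (ml v) ≠ 0 := by
    by_contra h
    push_neg at h
    exact hv0 ((Module.forall_dual_apply_eq_zero_iff K (ml v)).1 h)
  obtain ⟨f, hf⟩ := hf
  set φ : V →ₗ[D] K := (f.restrictScalars D).comp ml with hφ
  obtain ⟨s, hs⟩ := Module.Finite.fg_top (R := D) (M := V)
  obtain ⟨b, hb⟩ := IsLocalization.exist_integer_multiples (nonZeroDivisors D) s
      (fun x : V => φ x)
  set W : Submodule D V :=
    { carrier := {x : V | IsLocalization.IsInteger D ((b : D) • φ x)}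
      add_mem' := fun hx hy => by
        simpa [smul_add, map_add] using IsLocalization.isInteger_add hx hy
      zero_mem' := by simp [IsLocalization.isInteger_zero]
      smul_mem' := fun d x hx => by
        show IsLocalization.IsInteger D ((b : D) • φ (d • x))
        have hcomm : (b : D) • φ (d • x) = d • ((b : D) • φ x) := by
          rw [map_smul, smul_comm]
        rw [hcomm]
        exact IsLocalization.isInteger_smul hx } with hW
  have hWtop : W = ⊤ := by
    rw [eq_top_iff, ← hs, Submodule.span_le]
    intro x hx
    exact hb x hx
  have hint : ∀ x : V, IsLocalization.IsInteger D ((b : D) • φ x) := by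
    intro x
    have : x ∈ W := hWtop.symm ▸ Submodule.mem_top
    exact this
  set rng : Submodule D K := LinearMap.range (Algebra.linearMap D K) with hrng
  have hinj : Function.Injective (Algebra.linearMap D K) := IsFractionRing.injective D K
  set e : D ≃ₗ[D] rng := LinearEquiv.ofInjective (Algebra.linearMap D K) hinj with he
  have hcod : ∀ c : V, ((b : D) • φ) c ∈ rng := fun x => by
    obtain ⟨d, hd⟩ := hint x
    exact ⟨d, hd⟩
  set ψ : V →ₗ[D] D :=
    e.symm.toLinearMap.comp (LinearMap.codRestrict rng ((b : D) • φ) hcod) with hψ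
  refine ⟨ψ, fun h0 => ?_⟩
  have : ((b : D) • φ) v = 0 := by
    have h1 : (LinearMap.codRestrict rng ((b : D) • φ) hcod) v = e (ψ v) := by
      simp [hψ]
    rw [h0, map_zero] at h1
    have := congrArg (Subtype.val) h1
    simpa using this
  have hb0 : (b : D) ≠ 0 := nonZeroDivisors.ne_zero b.2
  have : (algebraMap D K (b : D)) * f (ml v) = 0 := by
    simpa [Algebra.smul_def, hφ] using this
  rcases mul_eq_zero.1 this with h | h
  · exact hb0 ((map_eq_zero_iff _ hinj).1 (by simpa using h))
  · exact hf h

lemma aux_exists_nonzero_hom {M N : Type} [IsNoetherianRing R] [AddCommGroup M] [Module R M]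
    [Module.Finite R M] (hsupp : Module.support R M = Set.univ)
    [AddCommGroup N] [Module R N] [Nontrivial N] :
    ∃ φ : M →ₗ[R] N, φ ≠ 0 := by
  classical
  obtain ⟨p, hp⟩ := associatedPrimes.nonempty R N
  obtain ⟨hprime, x, hpx⟩ := isAssociatedPrime_iff.mp hp
  set P : PrimeSpectrum R := ⟨p, hprime⟩ with hP
  have hPsupp : P ∈ Module.support R M := by rw [hsupp]; trivial
  obtain ⟨w, hw⟩ := aux_support_quot P hPsupp
  have hfinV : Module.Finite (R ⧸ P.asIdeal) (M ⧸ (P.asIdeal • ⊤ : Submodule R M)) := by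
    have : Module.Finite R (M ⧸ (P.asIdeal • ⊤ : Submodule R M)) := inferInstance
    exact Module.Finite.of_restrictScalars_finite R _ _
  have hv : ∀ d : R ⧸ P.asIdeal, d ≠ 0 → d • w ≠ 0 := by
    intro d hd
    obtain ⟨r, rfl⟩ := Ideal.Quotient.mk_surjective d
    have hr : r ∉ P.asIdeal := fun hr => hd (Ideal.Quotient.eq_zero_iff_mem.2 hr)
    obtain ⟨m, rfl⟩ := Submodule.Quotient.mk_surjective _ w
    rw [Module.Quotient.mk_smul_mk]
    have := hw r hr
    rwa [Submodule.Quotient.mk_smul]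
  obtain ⟨ψ, hψ⟩ := aux_exists_functional w hv
  -- lift `D = R ⧸ p` into `N` using the associated prime
  have hker : (P.asIdeal : Submodule R R) ≤ LinearMap.ker (LinearMap.toSpanSingleton R N x) := by
    intro r hr
    rw [LinearMap.mem_ker, LinearMap.toSpanSingleton_apply]
    have := hpx ▸ (show r ∈ p from hr); simpa [Submodule.mem_colon_singleton] using this
  set liftN : (R ⧸ P.asIdeal) →ₗ[R] N := Submodule.liftQ (P.asIdeal : Submodule R R)
      (LinearMap.toSpanSingleton R N x) hker with hliftN
  set χ : M →ₗ[R] N :=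
    liftN.comp ((ψ.restrictScalars R).comp ((P.asIdeal • ⊤ : Submodule R M).mkQ)) with hχ
  obtain ⟨m₀, hm₀⟩ := Submodule.Quotient.mk_surjective _ w
  have hval : χ m₀ ≠ 0 := by
    have h1 : χ m₀ = liftN (ψ w) := congrArg (fun t => liftN (ψ t)) hm₀
    obtain ⟨r, hr⟩ := Ideal.Quotient.mk_surjective (ψ w)
    have hrp : r ∉ P.asIdeal := by
      intro hmem
      exact hψ (by rw [← hr, Ideal.Quotient.eq_zero_iff_mem.2 hmem])
    rw [h1, ← hr]
    have h2 : liftN (Ideal.Quotient.mk P.asIdeal r) = r • x := by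
      have : Ideal.Quotient.mk P.asIdeal r
          = Submodule.Quotient.mk (p := (P.asIdeal : Submodule R R)) r := rfl
      rw [this, Submodule.liftQ_apply, LinearMap.toSpanSingleton_apply]
    rw [h2]
    intro h0
    exact hrp (show r ∈ p by
      rw [hpx]; simpa [Submodule.mem_colon_singleton] using h0)
  exact ⟨χ, fun h => hval (by rw [h]; rfl)⟩

/-- If `Ext¹(M, M) = 0` and `ι : M →ₗ B` is injective, then every map `M → B ⧸ range ι`
lifts to a map `M → B`. -/
lemma aux_ext_lift {M B : Type} [AddCommGroup M] [Module R M] [AddCommGroup B] [Module R B]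
    (hext : Subsingleton
      (((Ext R (ModuleCat R) 1).obj (Opposite.op (ModuleCat.of R M))).obj (ModuleCat.of R M)))
    (ι : M →ₗ[R] B) (hι : Function.Injective ι)
    (f : M →ₗ[R] (B ⧸ LinearMap.range ι)) :
    ∃ g : M →ₗ[R] B, (LinearMap.range ι).mkQ.comp g = f := by
  classical
  set X : ModuleCat R := ModuleCat.of R M with hX
  obtain ⟨P⟩ := (inferInstance : HasProjectiveResolution X).out
  set K := P.complex.linearYonedaObj R X with hK
  -- transport the Ext vanishing to the homology of `K` at 1
  have hsub : Subsingleton (K.homology 1) := by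
    have e := ((forget (ModuleCat R)).mapIso (P.isoExt 1 X)).toEquiv
    exact Equiv.subsingleton e.symm
  have hexact : (K.sc' 0 1 2).Exact := by
    rw [← HomologicalComplex.exactAt_iff' K 0 1 2 (by simp) (by simp),
      HomologicalComplex.exactAt_iff_isZero_homology]
    exact ModuleCat.isZero_of_subsingleton _
  -- notation for the resolution
  set P0 := P.complex.X 0 with hP0
  set P1 := P.complex.X 1 with hP1
  set d10 : P1 ⟶ P0 := P.complex.d 1 0 with hd10
  set d21 : P.complex.X 2 ⟶ P1 := P.complex.d 2 1 with hd21
  set p0 : P0 ⟶ X := P.π.f 0 with hp0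
  have hp0surj : Function.Surjective p0 := (ModuleCat.epi_iff_surjective p0).1 (inferInstanceAs (Epi (P.π.f 0)))
  -- lift f ∘ p0 through the surjection q
  set q : ModuleCat.of R B ⟶ ModuleCat.of R (B ⧸ LinearMap.range ι) :=
    ModuleCat.ofHom (LinearMap.range ι).mkQ with hq
  have hqepi : Epi q := (ModuleCat.epi_iff_surjective q).2 (Submodule.mkQ_surjective _)
  set fX : X ⟶ ModuleCat.of R (B ⧸ LinearMap.range ι) := ModuleCat.ofHom f with hfX
  set g0 : P0 ⟶ ModuleCat.of R B := Projective.factorThru (p0 ≫ fX) q with hg0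
  have hg0q : g0 ≫ q = p0 ≫ fX := Projective.factorThru_comp _ _
  -- the boundary g0 ∘ d10 lands in range ι
  have hmem : ∀ y : P1, g0 (d10 y) ∈ LinearMap.range ι := by
    intro y
    have h1 : q (g0 (d10 y)) = fX (p0 (d10 y)) := LinearMap.congr_fun (congrArg ModuleCat.Hom.hom hg0q) (d10 y)
    have h2 : p0 (d10 y) = 0 := by
      have : d10 ≫ p0 = 0 := P.complex_d_comp_π_f_zero
      exact LinearMap.congr_fun (congrArg ModuleCat.Hom.hom this) y
    rw [h2, map_zero] at h1
    rwa [← Submodule.Quotient.mk_eq_zero, ← Submodule.mkQ_apply]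
  -- produce the cocycle `a : P1 → M`
  set eqv : M ≃ₗ[R] LinearMap.range ι := LinearEquiv.ofInjective ι hι with heqv
  set aLM : ↑P1 →ₗ[R] M := eqv.symm.toLinearMap.comp
    (LinearMap.codRestrict (LinearMap.range ι) (d10 ≫ g0 : P1 ⟶ ModuleCat.of R B).hom hmem)
    with haLM
  have haι : ∀ y : P1, ι (aLM y) = g0 (d10 y) := by
    intro y
    have h1 : ι (eqv.symm ⟨g0 (d10 y), hmem y⟩) =
        ((eqv (eqv.symm ⟨g0 (d10 y), hmem y⟩)) : B) := (LinearEquiv.ofInjective_apply ι _).symm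
    rw [LinearEquiv.apply_symm_apply] at h1
    exact h1
  set a' : P1 ⟶ X := ModuleCat.ofHom aLM with ha'
  have hcocycle : K.d 1 2 a' = 0 := by
    rw [ChainComplex.linearYonedaObj_d]
    show d21 ≫ a' = 0
    apply ModuleCat.hom_ext
    apply LinearMap.ext
    intro y
    apply hι
    show ι (aLM (d21 y)) = ι 0
    rw [haι, map_zero]
    have h0 : d21 ≫ d10 = 0 := P.complex.d_comp_d 2 1 0
    have := LinearMap.congr_fun (congrArg ModuleCat.Hom.hom h0) y
    show g0 (d10 (d21 y)) = 0
    rw [show d10 (d21 y) = 0 from this, map_zero]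
  obtain ⟨h'0, hh'⟩ := (ShortComplex.moduleCat_exact_iff _).1 hexact a' hcocycle
  set h' : P0 ⟶ X := (h'0 : P0 ⟶ X) with hh'def
  have hh'' : ∀ y : P1, h' (d10 y) = aLM y := by
    intro y
    have : K.d 0 1 h' = a' := hh'
    rw [ChainComplex.linearYonedaObj_d] at this
    have h2 : d10 ≫ h' = a' := this
    exact LinearMap.congr_fun (congrArg ModuleCat.Hom.hom h2) y
  set g0' : P0 ⟶ ModuleCat.of R B := g0 - (h' ≫ ModuleCat.ofHom ι) with hg0'
  have hw : d10 ≫ g0' = 0 := by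
    apply ModuleCat.hom_ext
    apply LinearMap.ext
    intro y
    show g0 (d10 y) - (h' ≫ ModuleCat.ofHom ι) (d10 y) = 0
    have e2 : (h' ≫ ModuleCat.ofHom ι) (d10 y) = g0 (d10 y) := by
      show ι (h' (d10 y)) = g0 (d10 y)
      rw [hh'' y, haι y]
    rw [e2, sub_self]
  obtain ⟨g, hg⟩ := Limits.Cofork.IsColimit.desc' P.isColimitCokernelCofork g0'
    (by rw [Limits.zero_comp, hw])
  have hgp : p0 ≫ g = g0' := by exact hg
  refine ⟨g.hom, ?_⟩
  apply LinearMap.ext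
  intro m
  obtain ⟨y, rfl⟩ := hp0surj m
  have h1 : (LinearMap.range ι).mkQ (g (p0 y)) = q (g0' y) := by
    show q (g (p0 y)) = q (g0' y)
    rw [show g (p0 y) = g0' y from LinearMap.congr_fun (congrArg ModuleCat.Hom.hom hgp) y]
  have h2 : q (g0' y) = q (g0 y) - q ((h' ≫ ModuleCat.ofHom ι) y) := by
    show q (g0 y - (h' ≫ ModuleCat.ofHom ι) y) = _
    rw [map_sub]
  have h3 : q ((h' ≫ ModuleCat.ofHom ι) y) = 0 := by
    show (LinearMap.range ι).mkQ (ι (h' y)) = 0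
    rw [Submodule.mkQ_apply, Submodule.Quotient.mk_eq_zero]
    exact ⟨h' y, rfl⟩
  have h4 : q (g0 y) = fX (p0 y) := (LinearMap.congr_fun (congrArg ModuleCat.Hom.hom hg0q) y)
  show (LinearMap.range ι).mkQ (g (p0 y)) = f (p0 y)
  rw [h1, h2, h3, h4, sub_zero]
  rfl

end Aux

/-- Let `(R, m)` be a commutative Noetherian local ring and `M` a finitely
generated `R`-module with `Supp(M) = Spec(R)`. If `Ext¹_R(M, M) = 0` and
`End_R(M) ≅ Hom_R(M, M**)` as right `End_R(M)`-modules, then `M` is reflexive. -/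
theorem statement1 (R M : Type) [CommRing R] [IsNoetherianRing R] [IsLocalRing R]
    [AddCommGroup M] [Module R M] [Module.Finite R M]
    (hsupp : Module.support R M = Set.univ)
    (hext : Subsingleton
      (((Ext R (ModuleCat R) 1).obj (Opposite.op (ModuleCat.of R M))).obj (ModuleCat.of R M)))
    (hiso : ∃ e : Module.End R M ≃+ (M →ₗ[R] Module.Dual R (Module.Dual R M)),
      ∀ (f g : Module.End R M), e (f * g) = (e f).comp g) :
    Function.Bijective (Module.Dual.eval R M) := by
  classical
  obtain ⟨e, he⟩ := hiso
  set D1 := Module.Dual R M with hD1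
  set DD := Module.Dual R D1 with hDD
  set ev : M →ₗ[R] DD := Module.Dual.eval R M with hev
  set u : M →ₗ[R] DD := e 1 with hu
  have heu : ∀ g : Module.End R M, e g = u.comp g := by
    intro g
    rw [← one_mul g, he 1 g]
    rfl
  have hbij : Function.Bijective (fun g : Module.End R M => u.comp g) := by
    have hfun : (fun g : Module.End R M => u.comp g) = ⇑e := by
      funext g; rw [heu g]
    rw [hfun]
    exact e.bijective
  -- the key identity: every α : M → M** factors as β* ∘ ev
  have key : ∀ α : M →ₗ[R] DD,
      ((α.dualMap.comp (Module.Dual.eval R D1)).dualMap).comp ev = α := by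
    intro α
    apply LinearMap.ext; intro x
    apply LinearMap.ext; intro l
    rfl
  set γ : DD →ₗ[R] DD := (u.dualMap.comp (Module.Dual.eval R D1)).dualMap with hγ
  have hγu : γ.comp ev = u := key u
  set π : Module.End R M := e.symm ev with hπ
  have hπev : u.comp π = ev := by rw [← heu π, hπ, e.apply_symm_apply]
  obtain ⟨h, hh0⟩ := hbij.2 (γ.comp u)
  have hh : u.comp h = γ.comp u := hh0
  have hhπ : h * π = 1 := by
    apply hbij.1
    show u.comp ((h * π : Module.End R M)) = u.comp 1
    calc u.comp (h * π) = (u.comp h).comp π := by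
          apply LinearMap.ext; intro x; rfl
      _ = (γ.comp u).comp π := by rw [hh]
      _ = γ.comp (u.comp π) := by apply LinearMap.ext; intro x; rfl
      _ = γ.comp ev := by rw [hπev]
      _ = u := hγu
      _ = u.comp 1 := by apply LinearMap.ext; intro x; rfl
  have hhsurj : Function.Surjective h := fun x => ⟨π x, LinearMap.congr_fun hhπ x⟩
  have hhinj : Function.Injective h :=
    OrzechProperty.injective_of_surjective_endomorphism h hhsurj
  have hπh : ∀ x, π (h x) = x := by
    intro x
    apply hhinj
    exact LinearMap.congr_fun hhπ (h x)
  -- ev is injective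
  have hevinj : Function.Injective ev := by
    rw [← LinearMap.ker_eq_bot]
    by_contra hker
    have : Nontrivial (LinearMap.ker ev) := by
      rcases Submodule.ne_bot_iff _ |>.1 hker with ⟨x, hx, hx0⟩
      exact nontrivial_of_ne ⟨x, hx⟩ 0 (by simpa using hx0)
    obtain ⟨φ, hφ⟩ := aux_exists_nonzero_hom (R := R) (M := M) (N := LinearMap.ker ev) hsupp
    set g' : Module.End R M := (LinearMap.ker ev).subtype.comp φ with hg'
    have hevg' : ev.comp g' = 0 := by
      apply LinearMap.ext; intro x
      exact (φ x).2
    have hug' : u.comp g' = u.comp (0 : Module.End R M) := by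
      calc u.comp g' = (γ.comp ev).comp g' := by rw [hγu]
        _ = γ.comp (ev.comp g') := by apply LinearMap.ext; intro x; rfl
        _ = 0 := by rw [hevg']; apply LinearMap.ext; intro x; simp
        _ = u.comp (0 : Module.End R M) := by apply LinearMap.ext; intro x; simp
    have : g' = 0 := hbij.1 hug'
    apply hφ
    apply LinearMap.ext; intro x
    have := LinearMap.congr_fun this x
    exact Subtype.ext (by simpa [hg'] using this)
  -- ev is surjective
  have hevsurj : Function.Surjective ev := by
    rw [← LinearMap.range_eq_top]
    by_contra hrange
    have : Nontrivial (DD ⧸ LinearMap.range ev) := by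
      apply Submodule.Quotient.nontrivial_iff.2
      exact hrange
    obtain ⟨f, hf⟩ := aux_exists_nonzero_hom (R := R) (M := M)
      (N := DD ⧸ LinearMap.range ev) hsupp
    obtain ⟨g, hg⟩ := aux_ext_lift hext ev hevinj f
    obtain ⟨g₁, hg₁⟩ := hbij.2 g
    set g₂ : Module.End R M := h * g₁ with hg₂
    have hπg₂ : π.comp g₂ = g₁ := by
      apply LinearMap.ext; intro x
      exact hπh (g₁ x)
    have hevg₂ : ev.comp g₂ = g := by
      calc ev.comp g₂ = (u.comp π).comp g₂ := by rw [hπev]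
        _ = u.comp (π.comp g₂) := by apply LinearMap.ext; intro x; rfl
        _ = u.comp g₁ := by rw [hπg₂]
        _ = g := hg₁
    apply hf
    rw [← hg, ← hevg₂]
    apply LinearMap.ext; intro x
    show (LinearMap.range ev).mkQ (ev (g₂ x)) = 0
    rw [Submodule.mkQ_apply, Submodule.Quotient.mk_eq_zero]
    exact ⟨g₂ x, rfl⟩
  exact ⟨hevinj, hevsurj⟩
end

section
/- Let (R, m) be a commutative Noetherian local ring and let M be a finitely generated, faithful, torsionless R-module. If A and B are finitely generated Z(E)-modules, then the natural surjection p : A ⊗_R B → A ⊗_{Z(E)} B is a surjective map of Z(E)-modules whose kernel is a torsion R-module, i.e., every element of ker(p) is annihilated by some nonzerodivisor of R. -/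
open TensorProduct

section AssPrime

variable {R M : Type*} [CommRing R] [AddCommGroup M] [Module R M]

lemma ass_subset_union [IsNoetherianRing R] (N : Submodule R M) :
    associatedPrimes R M ⊆ associatedPrimes R N ∪ associatedPrimes R (M ⧸ N) := by
  rintro p hp
  obtain ⟨hprime, x, hx⟩ := isAssociatedPrime_iff.mp hp
  by_cases h : ∀ a : R, a • x ∈ N → a • x = 0
  · right
    refine isAssociatedPrime_iff.mpr ⟨hprime, N.mkQ x, ?_⟩
    ext a
    rw [Submodule.mem_colon_singleton, Submodule.mem_bot]
    have hax : a ∈ p ↔ a • x = 0 := by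
      rw [hx, Submodule.mem_colon_singleton, Submodule.mem_bot]
    rw [hax]
    constructor
    · intro h0
      rw [← map_smul, h0, map_zero]
    · intro h0
      apply h
      have : N.mkQ (a • x) = 0 := by rwa [map_smul]
      rwa [Submodule.mkQ_apply, Submodule.Quotient.mk_eq_zero N] at this
  · push_neg at h
    obtain ⟨a, haN, ha0⟩ := h
    left
    refine isAssociatedPrime_iff.mpr ⟨hprime, ⟨a • x, haN⟩, ?_⟩
    ext c
    rw [Submodule.mem_colon_singleton, Submodule.mem_bot]
    have hcx : ∀ b : R, b ∈ p ↔ b • x = 0 := fun b => by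
      rw [hx, Submodule.mem_colon_singleton, Submodule.mem_bot]
    rw [Subtype.ext_iff]
    simp only [SetLike.mk_smul_mk, ZeroMemClass.coe_zero]
    constructor
    · intro hc
      rw [smul_comm, (hcx c).mp hc, smul_zero]
    · intro hc
      have : (c * a) • x = 0 := by rwa [mul_smul]
      rcases hprime.mul_mem_iff_mem_or_mem.mp ((hcx _).mpr this) with h1 | h1
      · exact h1
      · exact absurd ((hcx a).mp h1) ha0


lemma ass_quot_finite [IsNoetherianRing R] [IsNoetherian R M] (N : Submodule R M) :
    (associatedPrimes R (M ⧸ N)).Finite := by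
  refine IsNoetherian.induction (P := fun N => (associatedPrimes R (M ⧸ N)).Finite) ?_ N
  intro N ih
  by_cases hN : N = ⊤
  · subst hN
    haveI : Subsingleton (M ⧸ (⊤ : Submodule R M)) :=
      Submodule.Quotient.subsingleton_iff.mpr rfl
    rw [associatedPrimes.eq_empty_of_subsingleton]
    exact Set.finite_empty
  · haveI : Nontrivial (M ⧸ N) :=
      Submodule.Quotient.nontrivial_iff.mpr hN
    obtain ⟨p, hp⟩ := associatedPrimes.nonempty R (M ⧸ N)
    obtain ⟨hprime, x, hx⟩ := isAssociatedPrime_iff.mp hp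
    have hx0 : x ≠ 0 := by
      rintro rfl
      apply hprime.ne_top
      rw [hx, Ideal.eq_top_iff_one, Submodule.mem_colon_singleton, smul_zero]
      exact Submodule.zero_mem _
    set N' : Submodule R M := (R ∙ x).comap N.mkQ with hN'
    have hle : N ≤ N' := fun n hn => by
      simp only [hN', Submodule.mem_comap, Submodule.mkQ_apply,
        (Submodule.Quotient.mk_eq_zero N).mpr hn]
      exact Submodule.zero_mem _
    have hlt : N < N' := by
      obtain ⟨y, hy⟩ := Submodule.mkQ_surjective N x
      refine lt_of_le_of_ne hle (fun he => ?_)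
      have hyN' : y ∈ N' := by
        simp only [hN', Submodule.mem_comap, hy]
        exact Submodule.mem_span_singleton_self x
      rw [← he] at hyN'
      exact hx0 (by rw [← hy, Submodule.mkQ_apply, Submodule.Quotient.mk_eq_zero]; exact hyN')
    -- Ass(M/N) ⊆ Ass(span x) ∪ Ass((M/N)/span x)
    have key := ass_subset_union (M := M ⧸ N) (R ∙ x)
    -- Ass(span x) = {p}
    have e1 : associatedPrimes R ↥(R ∙ x) = {p} := by
      have hker : LinearMap.ker (LinearMap.toSpanSingleton R (M ⧸ N) x) = p := by
        ext c
        rw [LinearMap.mem_ker, LinearMap.toSpanSingleton_apply, hx,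
          Submodule.mem_colon_singleton, Submodule.mem_bot]
      have equiv1 : (R ⧸ p) ≃ₗ[R] ↥(R ∙ x) :=
        (Submodule.quotEquivOfEq _ _ hker.symm).trans
          ((LinearMap.toSpanSingleton R (M ⧸ N) x).quotKerEquivRange.trans
            (LinearEquiv.ofEq _ _ (LinearMap.span_singleton_eq_range R (M ⧸ N) x).symm))
      rw [← LinearEquiv.AssociatedPrimes.eq equiv1,
        associatedPrimes.eq_singleton_of_isPrimary hprime.isPrimary, hprime.radical]
    -- Ass((M/N)/span x) = Ass(M/N')
    have e2 : associatedPrimes R ((M ⧸ N) ⧸ (R ∙ x)) = associatedPrimes R (M ⧸ N') := by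
      have hmap : (R ∙ x) = N'.map N.mkQ := by
        rw [hN', Submodule.map_comap_eq, Submodule.range_mkQ, top_inf_eq]
      refine LinearEquiv.AssociatedPrimes.eq ?_
      rw [hmap]
      exact Submodule.quotientQuotientEquivQuotient N N' hle
    refine Set.Finite.subset (Set.Finite.union (Set.finite_singleton p) (ih N' hlt)) ?_
    rw [← e1, ← e2]
    exact key

lemma ass_finite [IsNoetherianRing R] [IsNoetherian R M] :
    (associatedPrimes R M).Finite := by
  have := ass_quot_finite (R := R) (M := M) ⊥
  rwa [LinearEquiv.AssociatedPrimes.eq (Submodule.quotEquivOfEqBot ⊥ rfl)] at this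

end AssPrime

section ZD

variable {R : Type*} [CommRing R] [IsNoetherianRing R]

/-- An ideal of a Noetherian ring consisting of zerodivisors is annihilated by a
nonzero element. -/
lemma exists_ann_of_subset_zd {I : Ideal R}
    (h : ∀ a ∈ I, a ∉ nonZeroDivisors R) :
    ∃ u : R, u ≠ 0 ∧ ∀ a ∈ I, u * a = 0 := by
  have hsub : (I : Set R) ⊆ ⋃ p ∈ associatedPrimes R R, (p : Set R) := by
    rw [biUnion_associatedPrimes_eq_zero_divisors R R]
    intro a ha
    obtain ⟨x, hx0, hx⟩ := by
      have := h a ha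
      rw [mem_nonZeroDivisors_iff_right] at this
      push_neg at this
      exact this
    exact ⟨x, hx, by rwa [smul_eq_mul, mul_comm]⟩
  have hfin : (associatedPrimes R R).Finite := ass_finite
  classical
  haveI : Nonempty (Ideal R) := ⟨⊥⟩
  obtain ⟨p, hps, hIp⟩ := by
    refine (Ideal.subset_union_prime (⊥ : Ideal R) (⊥ : Ideal R)
      (f := fun q : Ideal R => q) (s := hfin.toFinset) (I := I) ?_).mp ?_
    · intro q hq _ _
      exact ((hfin.mem_toFinset.mp hq).isPrime)
    · intro a ha
      have := hsub ha
      simp only [Set.mem_iUnion] at this ⊢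
      obtain ⟨q, hq, hq'⟩ := this
      exact ⟨q, by simpa using hfin.mem_toFinset.mpr hq, hq'⟩
  have hp := hfin.mem_toFinset.mp hps
  obtain ⟨hprime, u, hu⟩ := isAssociatedPrime_iff.mp hp
  have hu0 : u ≠ 0 := by
    rintro rfl
    apply hprime.ne_top
    rw [hu, Ideal.eq_top_iff_one, Submodule.mem_colon_singleton, smul_zero]
    exact Submodule.zero_mem _
  refine ⟨u, hu0, fun a ha => ?_⟩
  have : a ∈ p := hIp ha
  rw [hu, Submodule.mem_colon_singleton, Submodule.mem_bot, smul_eq_mul] at this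
  rw [mul_comm]; exact this

end ZD

section Trace

variable {R M : Type*} [CommRing R] [IsNoetherianRing R] [AddCommGroup M] [Module R M]

omit [IsNoetherianRing R] in
lemma center_smul_key {z : Module.End R M} (hz : z ∈ Subalgebra.center R (Module.End R M))
    (f : Module.Dual R M) (x y : M) : f x • z y = f (z x) • y := by
  have h := (Subalgebra.mem_center_iff.mp hz) (f.smulRight y)
  have := congrArg (fun g : Module.End R M => g x) h
  simpa [Module.End.mul_apply] using this.symm

lemma exists_regular_for_center (hfaithful : Module.annihilator R M = ⊥)
    (htor : Function.Injective (Module.Dual.eval R M)) :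
    ∃ r ∈ nonZeroDivisors R, ∀ z ∈ Subalgebra.center R (Module.End R M),
      ∃ s : R, ∀ y : M, r • z y = s • y := by
  set T : Set R := {r | ∃ (f : Module.Dual R M) (x : M), f x = r} with hT
  set I : Ideal R := Ideal.span T with hI
  have hreg : ∃ r ∈ I, r ∈ nonZeroDivisors R := by
    by_contra hcon
    push_neg at hcon
    obtain ⟨u, hu0, hu⟩ := exists_ann_of_subset_zd (I := I) hcon
    apply hu0
    have hum : ∀ x : M, u • x = 0 := by
      intro x
      apply htor
      rw [map_zero]
      ext f
      have hfx : f x ∈ I := Ideal.subset_span ⟨f, x, rfl⟩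
      simp only [Module.Dual.eval_apply, LinearMap.zero_apply, map_smul, smul_eq_mul]
      exact hu _ hfx
    have : u ∈ Module.annihilator R M := Module.mem_annihilator.mpr hum
    rw [hfaithful] at this
    simpa using this
  obtain ⟨r, hrI, hr⟩ := hreg
  refine ⟨r, hr, fun z hz => ?_⟩
  refine Submodule.span_induction
    (p := fun r _ => ∃ s : R, ∀ y : M, r • z y = s • y) ?_ ?_ ?_ ?_ hrI
  · rintro _ ⟨f, x, rfl⟩
    exact ⟨f (z x), fun y => center_smul_key hz f x y⟩
  · exact ⟨0, fun y => by simp⟩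
  · rintro a b _ _ ⟨s, hs⟩ ⟨t, ht⟩
    exact ⟨s + t, fun y => by rw [add_smul, hs, ht, add_smul]⟩
  · rintro c a _ ⟨s, hs⟩
    exact ⟨c * s, fun y => by rw [smul_eq_mul, mul_smul, hs, mul_smul]⟩

end Trace

set_option maxHeartbeats 1000000 in
set_option synthInstance.maxHeartbeats 1000000 in
/-- Let `(R, m)` be a commutative Noetherian local ring, `M` a finitely generated
faithful torsionless `R`-module, and `Z(E)` the center of `E = End_R(M)` (an `R`-algebra).
If `A` and `B` are finitely generated `Z(E)`-modules, then the natural map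
`p : A ⊗_R B → A ⊗_{Z(E)} B` is a surjection of `Z(E)`-modules whose kernel is a torsion
`R`-module. -/
theorem statement3 (R M : Type) [CommRing R] [IsNoetherianRing R] [IsLocalRing R]
    [AddCommGroup M] [Module R M] [Module.Finite R M]
    (hfaithful : Module.annihilator R M = ⊥)
    (htorsionless : Function.Injective (Module.Dual.eval R M))
    (A B : Type) [AddCommGroup A] [AddCommGroup B]
    [Module (Subalgebra.center R (Module.End R M)) A]
    [Module (Subalgebra.center R (Module.End R M)) B]
    [Module.Finite (Subalgebra.center R (Module.End R M)) A]
    [Module.Finite (Subalgebra.center R (Module.End R M)) B]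
    [Module R A] [Module R B]
    [IsScalarTower R (Subalgebra.center R (Module.End R M)) A]
    [IsScalarTower R (Subalgebra.center R (Module.End R M)) B] :
    Function.Surjective
      (TensorProduct.mapOfCompatibleSMul (Subalgebra.center R (Module.End R M)) R
        (Subalgebra.center R (Module.End R M)) A B) ∧
    ∀ x ∈ LinearMap.ker
        (TensorProduct.mapOfCompatibleSMul (Subalgebra.center R (Module.End R M)) R
        (Subalgebra.center R (Module.End R M)) A B),
      ∃ r ∈ nonZeroDivisors R, r • x = 0 := by
  constructor
  · intro x
    induction x using TensorProduct.induction_on with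
    | zero => exact ⟨0, map_zero _⟩
    | tmul a b => exact ⟨a ⊗ₜ[R] b, rfl⟩
    | add x y hx hy =>
      obtain ⟨u, hu⟩ := hx
      obtain ⟨v, hv⟩ := hy
      exact ⟨u + v, by rw [map_add, hu, hv]⟩
  · obtain ⟨r, hr, hkey⟩ := exists_regular_for_center hfaithful htorsionless
    have hzs : ∀ z : Subalgebra.center R (Module.End R M), ∃ s : R,
        r • z = s • (1 : Subalgebra.center R (Module.End R M)) := by
      intro z
      obtain ⟨s, hs⟩ := hkey (z : Module.End R M) z.2
      refine ⟨s, Subtype.ext ?_⟩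
      ext y
      simpa using hs y
    set K : Submodule (Subalgebra.center R (Module.End R M)) (A ⊗[R] B) :=
      { carrier := {x | r • x = 0}
        add_mem' := by
          intro x y hx hy
          simp only [Set.mem_setOf_eq] at *
          rw [smul_add, hx, hy, add_zero]
        zero_mem' := smul_zero r
        smul_mem' := by
          intro z x hx
          simp only [Set.mem_setOf_eq] at *
          rw [smul_comm, hx, smul_zero] } with hKdef
    have hmemK : ∀ x : A ⊗[R] B, x ∈ K ↔ r • x = 0 := fun x => Iff.rfl
    have hbal : ∀ (z : Subalgebra.center R (Module.End R M)) (a : A) (b : B),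
        (Submodule.Quotient.mk (a ⊗ₜ[R] (z • b)) : (A ⊗[R] B) ⧸ K) =
          Submodule.Quotient.mk ((z • a) ⊗ₜ[R] b) := by
      intro z a b
      rw [Submodule.Quotient.eq]
      obtain ⟨s, hs⟩ := hzs z
      rw [hmemK, smul_sub]
      have h1 : r • (z • b) = s • b := by
        rw [← smul_assoc, hs, smul_assoc, one_smul]
      have h2 : r • (z • a) = s • a := by
        rw [← smul_assoc, hs, smul_assoc, one_smul]
      rw [← tmul_smul, h1, smul_tmul', h2, smul_tmul, sub_self]
    let bil : A →ₗ[Subalgebra.center R (Module.End R M)]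
        (B →ₗ[Subalgebra.center R (Module.End R M)] ((A ⊗[R] B) ⧸ K)) :=
      { toFun := fun a =>
          { toFun := fun b => Submodule.Quotient.mk (a ⊗ₜ[R] b)
            map_add' := fun b₁ b₂ => by rw [tmul_add, ← Submodule.Quotient.mk_add]
            map_smul' := fun z b => by
              rw [RingHom.id_apply, ← Submodule.Quotient.mk_smul, smul_tmul']
              exact hbal z a b }
        map_add' := fun a₁ a₂ => LinearMap.ext fun b => by
          simp only [LinearMap.coe_mk, AddHom.coe_mk, LinearMap.add_apply]
          rw [add_tmul, ← Submodule.Quotient.mk_add]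
        map_smul' := fun z a => LinearMap.ext fun b => by
          simp only [LinearMap.coe_mk, AddHom.coe_mk, RingHom.id_apply, LinearMap.smul_apply]
          rw [← Submodule.Quotient.mk_smul, smul_tmul'] }
    let q := TensorProduct.lift bil
    have hcomp : ∀ x : A ⊗[R] B,
        q (TensorProduct.mapOfCompatibleSMul (Subalgebra.center R (Module.End R M)) R
            (Subalgebra.center R (Module.End R M)) A B x)
          = Submodule.Quotient.mk x := by
      intro x
      induction x using TensorProduct.induction_on with
      | zero => simp
      | tmul a b =>
        have h : TensorProduct.mapOfCompatibleSMul (Subalgebra.center R (Module.End R M)) R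
            (Subalgebra.center R (Module.End R M)) A B
            (a ⊗ₜ[R] b) = a ⊗ₜ[Subalgebra.center R (Module.End R M)] b := rfl
        rw [h]
        exact TensorProduct.lift.tmul a b
      | add x y hx hy =>
        rw [map_add, map_add, hx, hy, ← Submodule.Quotient.mk_add]
    intro x hx
    refine ⟨r, hr, ?_⟩
    have h0 : (Submodule.Quotient.mk x : (A ⊗[R] B) ⧸ K) = 0 := by
      rw [← hcomp x, LinearMap.mem_ker.mp hx, map_zero]
    rw [Submodule.Quotient.mk_eq_zero] at h0
    exact (hmemK x).mp h0
end
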